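/- arXiv:1904.02928 — 4 statements merged into one kernel-verified Lean document; each statement's English description precedes it below -/
import Mathlib

section
/- Let d ∈ ℕ, let ν be a Lévy measure on ℝ, let G ∈ L¹(ℝ^d), let 0 < r < R, and assume ∫_{|ρ|>1} |ρ| (∫_0^{1/|ρ|} d_{G_R}(α) λ¹(dα)) ν(dρ) < ∞, where G_R(x) := ∫_{B_R(x)} |G(y)| λ^d(dy). Let (φ_n) be a sequence of bounded measurable functions on ℝ^d with φ_n(y) = 0 for ‖y‖ ≥ r and ‖φ_n‖_∞ → 0 as n → ∞. Then ∫_{ℝ^d} ∫_ℝ |ρ·(φ_n*G)(x)| · |𝟙_{|ρ(φ_n*G)(x)| ≤ 1} − 𝟙_{|ρ| ≤ 1}| ν(dρ) λ^d(dx) → 0 as n → ∞. -/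
open MeasureTheory ENNReal Filter Topology

noncomputable section

/-- `ℝ^d` with the Euclidean structure. -/
abbrev Rd (d : ℕ) := EuclideanSpace ℝ (Fin d)

/-- The distribution function `d_f(α) = λ^d {x : |f x| > α}`. -/
def distFun {d : ℕ} (f : Rd d → ℝ) (α : ℝ) : ℝ≥0∞ := volume {x | α < |f x|}

/-- The convolution `(φ * G)(x) = ∫ G(y) φ(x - y) dy`. -/
def conv {d : ℕ} (φ G : Rd d → ℝ) (x : Rd d) : ℝ := ∫ y, G y * φ (x - y)

/-- `G_R(x) = ∫_{B_R(x)} |G(y)| dy`. -/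
def ballInt {d : ℕ} (G : Rd d → ℝ) (R : ℝ) (x : Rd d) : ℝ := ∫ y in Metric.ball x R, |G y|

/-! With `c_n = sup |φ_n|`, the convolution satisfies `|φ_n * G| ≤ c_n G_R` and
`|φ_n * G| ≤ c_n ‖G‖₁`. Once `c_n ‖G‖₁ ≤ 1` the integrand vanishes for `|ρ| ≤ 1` and is at most
`min 1 (c_n |ρ| G_R(x))` for `|ρ| > 1`. These bounds tend to `0` pointwise and are dominated by
`min 1 (|ρ| G_R(x))`, whose integral over `{|ρ| > 1} × ℝ^d` is, by the layer-cake formula, at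
most the finite integral in the hypothesis on `G_R`. The Lévy condition makes `ν` finite on
`{|ρ| > 1}`, which is what Tonelli's theorem needs there. -/

theorem ballInt_congr_ae {d : ℕ} {G G' : Rd d → ℝ} (h : G =ᵐ[volume] G') (R : ℝ) :
    ballInt G R = ballInt G' R :=
  funext fun _ => integral_congr_ae <| ae_restrict_of_ae <| h.mono fun _ hy => congrArg abs hy

theorem measurable_ballInt {d : ℕ} {G : Rd d → ℝ} (hG : AEMeasurable G volume) (R : ℝ) :
    Measurable (ballInt G R) := by
  rw [ballInt_congr_ae hG.ae_eq_mk]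
  have hball : MeasurableSet {p : Rd d × Rd d | p.2 ∈ Metric.ball p.1 R} :=
    (isOpen_lt (continuous_snd.dist continuous_fst) continuous_const).measurableSet
  have hf : StronglyMeasurable fun p : Rd d × Rd d =>
      {p : Rd d × Rd d | p.2 ∈ Metric.ball p.1 R}.indicator (fun p => |hG.mk G p.2|) p :=
    ((hG.measurable_mk.comp measurable_snd).abs.indicator hball).stronglyMeasurable
  convert (hf.integral_prod_right' (ν := (volume : Measure (Rd d)))).measurable using 2 with x
  rw [ballInt, ← integral_indicator measurableSet_ball]
  rfl

theorem lintegral_min_one_ofReal_mul_le {α : Type*} [MeasurableSpace α] (μ : Measure α)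
    {f : α → ℝ} (hf : AEMeasurable f μ) {a : ℝ} (ha : 0 < a) :
    ∫⁻ x, min 1 (ENNReal.ofReal (a * |f x|)) ∂μ ≤
      ENNReal.ofReal a * ∫⁻ t in Set.Ioc 0 (1 / a), μ {x | t < |f x|} := by
  have hsplit : ∀ x, min 1 (ENNReal.ofReal (a * |f x|)) =
      ENNReal.ofReal a * ENNReal.ofReal (min (1 / a) |f x|) := by
    intro x
    rw [← ENNReal.ofReal_mul ha.le, mul_min_of_nonneg _ _ ha.le, mul_one_div_cancel ha.ne',
      ENNReal.ofReal_min, ENNReal.ofReal_one]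
  simp_rw [hsplit]
  rw [lintegral_const_mul' _ _ ofReal_ne_top]
  gcongr
  rw [lintegral_eq_lintegral_meas_lt μ (.of_forall fun x => le_min (by positivity) (abs_nonneg _))
    (aemeasurable_const.min hf.abs)]
  calc ∫⁻ t in Set.Ioi 0, μ {x | t < min (1 / a) |f x|}
      ≤ ∫⁻ t in Set.Ioi 0, (Set.Iic (1 / a)).indicator (fun t => μ {x | t < |f x|}) t := by
        refine lintegral_mono fun t => ?_
        by_cases ht : t ≤ 1 / a
        · rw [Set.indicator_of_mem (Set.mem_Iic.2 ht)]
          exact measure_mono fun x hx => (lt_min_iff.1 hx.out).2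
        · have hempty : {x | t < min (1 / a) |f x|} = ∅ :=
            Set.eq_empty_of_forall_notMem fun x hx => ht (hx.out.le.trans (min_le_left _ _))
          rw [hempty, measure_empty]
          exact zero_le
    _ = ∫⁻ t in Set.Ioc 0 (1 / a), μ {x | t < |f x|} := by
        rw [lintegral_indicator measurableSet_Iic, Measure.restrict_restrict measurableSet_Iic,
          Set.Iic_inter_Ioi]

theorem tendsto_lintegral_min_one_ofReal_mul {α : Type*} [MeasurableSpace α] {μ : Measure α}
    {h : α → ℝ} (hh : AEMeasurable h μ) (hh0 : ∀ x, 0 ≤ h x)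
    (hfin : ∫⁻ x, min 1 (ENNReal.ofReal (h x)) ∂μ ≠ ⊤) :
    Tendsto (fun ε : ℝ => ∫⁻ x, min 1 (ENNReal.ofReal (ε * h x)) ∂μ) (𝓝 0) (𝓝 0) := by
  have hlim : ∀ x, Tendsto (fun ε : ℝ => min 1 (ENNReal.ofReal (ε * h x))) (𝓝 0) (𝓝 0) := by
    intro x
    have : Tendsto (fun ε : ℝ => ε * h x) (𝓝 0) (𝓝 0) := by
      simpa using (tendsto_id (x := 𝓝 (0 : ℝ))).mul_const (h x)
    simpa using tendsto_const_nhds.min (ENNReal.tendsto_ofReal this)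
  simpa using tendsto_lintegral_filter_of_dominated_convergence' _
    (.of_forall fun ε => aemeasurable_const.min ((hh.const_mul ε).ennreal_ofReal))
    ((eventually_le_nhds one_pos).mono fun ε hε => .of_forall fun x =>
      min_le_min le_rfl (ENNReal.ofReal_le_ofReal (mul_le_of_le_one_left (hh0 x) hε)))
    hfin (.of_forall hlim)

theorem abs_conv_le_mul_setIntegral {d : ℕ} {φ G : Rd d → ℝ} (hG : Integrable G volume) {C : ℝ}
    (hC : ∀ y, |φ y| ≤ C) {x : Rd d} {s : Set (Rd d)} (hs : ∀ y ∉ s, φ (x - y) = 0) :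
    |conv φ G x| ≤ C * ∫ y in s, |G y| := by
  rw [conv, ← Real.norm_eq_abs, ← setIntegral_eq_integral_of_forall_compl_eq_zero fun y hy => by
    simp [hs y hy], ← integral_const_mul]
  refine norm_integral_le_of_norm_le (hG.abs.const_mul C).restrict (.of_forall fun y => ?_)
  rw [Real.norm_eq_abs, abs_mul, mul_comm]
  exact mul_le_mul_of_nonneg_right (hC _) (abs_nonneg _)

theorem abs_conv_le_mul_ballInt {d : ℕ} {φ G : Rd d → ℝ} (hG : Integrable G volume) {C r R : ℝ}
    (hC : ∀ y, |φ y| ≤ C) (hφ : ∀ y, r ≤ ‖y‖ → φ y = 0) (hrR : r ≤ R) (x : Rd d) :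
    |conv φ G x| ≤ C * ballInt G R x :=
  abs_conv_le_mul_setIntegral hG hC fun y hy => hφ _ <| by
    rw [← dist_eq_norm, dist_comm]
    exact hrR.trans (not_lt.1 hy)

theorem abs_conv_le_mul_integral {d : ℕ} {φ G : Rd d → ℝ} (hG : Integrable G volume) {C : ℝ}
    (hC : ∀ y, |φ y| ≤ C) (x : Rd d) :
    |conv φ G x| ≤ C * ∫ y, |G y| := by
  simpa using abs_conv_le_mul_setIntegral (s := Set.univ) (x := x) hG hC (by simp)

-- The error made by truncating a jump `ρ u` at `|ρ u| ≤ 1` instead of at `|ρ| ≤ 1`.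
def truncationDefect (ρ u : ℝ) : ℝ :=
  |ρ * u| * |(if |ρ * u| ≤ 1 then (1 : ℝ) else 0) - (if |ρ| ≤ 1 then (1 : ℝ) else 0)|

theorem ofReal_truncationDefect_le {ρ u b : ℝ} (hu : |u| ≤ 1) (hub : |u| ≤ b) :
    ENNReal.ofReal (truncationDefect ρ u) ≤
      {ρ : ℝ | 1 < |ρ|}.indicator (fun ρ => min 1 (ENNReal.ofReal (|ρ| * b))) ρ := by
  unfold truncationDefect
  by_cases hρ : ρ ∈ {ρ : ℝ | 1 < |ρ|}
  · rw [Set.indicator_of_mem hρ, if_neg (not_le.2 hρ.out)]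
    by_cases hρu : |ρ * u| ≤ 1
    · rw [if_pos hρu, sub_zero, abs_one, mul_one, abs_mul]
      rw [abs_mul] at hρu
      exact le_min (ENNReal.ofReal_le_one.2 hρu)
        (ENNReal.ofReal_le_ofReal (mul_le_mul_of_nonneg_left hub (abs_nonneg ρ)))
    · rw [if_neg hρu]
      simp
  · have hρ1 : |ρ| ≤ 1 := not_lt.1 fun h => hρ h
    have hρu : |ρ * u| ≤ 1 := by
      rw [abs_mul]
      exact mul_le_one₀ hρ1 (abs_nonneg u) hu
    rw [Set.indicator_of_notMem hρ, if_pos hρu, if_pos hρ1]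
    simp

theorem measure_one_lt_abs_lt_top {ν : Measure ℝ}
    (hν : ∫⁻ ρ, ENNReal.ofReal (min 1 (ρ ^ 2)) ∂ν < ⊤) : ν {ρ : ℝ | 1 < |ρ|} < ⊤ := by
  have hS : MeasurableSet {ρ : ℝ | 1 < |ρ|} := measurableSet_lt measurable_const measurable_abs
  calc ν {ρ : ℝ | 1 < |ρ|} = ∫⁻ _ in {ρ : ℝ | 1 < |ρ|}, 1 ∂ν := (setLIntegral_one _).symm
    _ ≤ ∫⁻ ρ in {ρ : ℝ | 1 < |ρ|}, ENNReal.ofReal (min 1 (ρ ^ 2)) ∂ν :=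
        setLIntegral_mono' hS fun ρ hρ => ENNReal.one_le_ofReal.2 <|
          le_min le_rfl ((one_lt_sq_iff_one_lt_abs ρ).2 hρ).le
    _ ≤ ∫⁻ ρ, ENNReal.ofReal (min 1 (ρ ^ 2)) ∂ν := setLIntegral_le_lintegral _ _
    _ < ⊤ := hν

theorem lintegral_min_one_abs_mul_ballInt_lt_top {d : ℕ} {ν : Measure ℝ} {G : Rd d → ℝ}
    (hG : AEMeasurable G volume) {R : ℝ}
    (hass : ∫⁻ ρ in {ρ : ℝ | 1 < |ρ|},
        (ENNReal.ofReal |ρ| * ∫⁻ α in Set.Ioc (0 : ℝ) (1 / |ρ|), distFun (ballInt G R) α) ∂ν < ⊤) :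
    ∫⁻ p, min 1 (ENNReal.ofReal (|p.1| * |ballInt G R p.2|))
      ∂((ν.restrict {ρ : ℝ | 1 < |ρ|}).prod volume) < ⊤ := by
  have hg := measurable_ballInt hG R
  rw [lintegral_prod _ (by fun_prop)]
  refine lt_of_le_of_lt (setLIntegral_mono' (measurableSet_lt measurable_const measurable_abs)
    fun ρ hρ => ?_) hass
  exact lintegral_min_one_ofReal_mul_le volume hg.aemeasurable (one_pos.trans hρ)

theorem lintegral_truncationDefect_conv_le {d : ℕ} (ν : Measure ℝ)
    [SFinite (ν.restrict {ρ : ℝ | 1 < |ρ|})] {φ G : Rd d → ℝ} (hG : Integrable G volume)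
    {C r R : ℝ} (hC : ∀ y, |φ y| ≤ C) (hφ : ∀ y, r ≤ ‖y‖ → φ y = 0) (hrR : r ≤ R)
    (hCG : C * ∫ y, |G y| ≤ 1) :
    ∫⁻ x, ∫⁻ ρ, ENNReal.ofReal (truncationDefect ρ (conv φ G x)) ∂ν ≤
      ∫⁻ p, min 1 (ENNReal.ofReal (C * (|p.1| * |ballInt G R p.2|)))
        ∂((ν.restrict {ρ : ℝ | 1 < |ρ|}).prod volume) := by
  have hg := measurable_ballInt hG.aemeasurable R
  rw [lintegral_prod_symm _ (by fun_prop)]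
  refine lintegral_mono fun x => ?_
  rw [← lintegral_indicator (measurableSet_lt measurable_const measurable_abs)]
  refine lintegral_mono fun ρ => ?_
  have hb : |conv φ G x| ≤ C * |ballInt G R x| :=
    (abs_conv_le_mul_ballInt hG hC hφ hrR x).trans
      (mul_le_mul_of_nonneg_left (le_abs_self _) ((abs_nonneg _).trans (hC 0)))
  convert ofReal_truncationDefect_le ((abs_conv_le_mul_integral hG hC x).trans hCG) hb using 5
  dsimp only
  ring

theorem statement2_general {d : ℕ} (ν : Measure ℝ)
    (hνlevy : ∫⁻ ρ, ENNReal.ofReal (min 1 (ρ ^ 2)) ∂ν < ⊤)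
    (G : Rd d → ℝ) (hG : MeasureTheory.Integrable G volume)
    (r R : ℝ) (hrR : r < R)
    (hass2 : ∫⁻ ρ in {ρ : ℝ | 1 < |ρ|},
        (ENNReal.ofReal |ρ| * ∫⁻ α in Set.Ioc (0 : ℝ) (1 / |ρ|),
          distFun (ballInt G R) α) ∂ν < ⊤)
    (φ : ℕ → Rd d → ℝ)
    (hφb : ∀ n, BddAbove (Set.range fun y => |φ n y|))
    (hφs : ∀ n, ∀ y : Rd d, r ≤ ‖y‖ → φ n y = 0)
    (hφ0 : Tendsto (fun n => ⨆ y, |φ n y|) atTop (𝓝 (0 : ℝ))) :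
    Tendsto (fun n => ∫⁻ x, ∫⁻ ρ,
        ENNReal.ofReal (|ρ * conv (φ n) G x| *
          |(if |ρ * conv (φ n) G x| ≤ 1 then (1 : ℝ) else 0) -
            (if |ρ| ≤ 1 then (1 : ℝ) else 0)|) ∂ν)
      atTop (𝓝 (0 : ℝ≥0∞)) := by
  have : IsFiniteMeasure (ν.restrict {ρ : ℝ | 1 < |ρ|}) :=
    isFiniteMeasure_restrict.2 (measure_one_lt_abs_lt_top hνlevy).ne
  have hg := measurable_ballInt hG.aemeasurable R
  have hdom := tendsto_lintegral_min_one_ofReal_mul (by fun_prop)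
    (fun p => mul_nonneg (abs_nonneg _) (abs_nonneg _))
    (lintegral_min_one_abs_mul_ballInt_lt_top hG.aemeasurable hass2).ne
  have hsmall : ∀ᶠ n in atTop, (⨆ y, |φ n y|) * ∫ y, |G y| ≤ 1 :=
    ((hφ0.mul_const _).eventually_lt_const (by simp)).mono fun _ h => h.le
  refine tendsto_of_tendsto_of_tendsto_of_le_of_le' tendsto_const_nhds (hdom.comp hφ0)
    (.of_forall fun _ => zero_le) (hsmall.mono fun n hn => ?_)
  exact lintegral_truncationDefect_conv_le ν hG (le_ciSup (hφb n)) (hφs n) hrR.le hn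

/-- under the integrability condition (ass2) on the Lévy measure `ν`,
the compensator-type integrals of `φ_n * G` tend to `0` when `‖φ_n‖_∞ → 0`. -/
theorem statement2 {d : ℕ} (hd : 0 < d) (ν : Measure ℝ)
    (hν0 : ν {0} = 0)
    (hνlevy : ∫⁻ ρ, ENNReal.ofReal (min 1 (ρ ^ 2)) ∂ν < ⊤)
    (G : Rd d → ℝ) (hG : MeasureTheory.Integrable G volume)
    (r R : ℝ) (hr : 0 < r) (hrR : r < R)
    (hass2 : ∫⁻ ρ in {ρ : ℝ | 1 < |ρ|},
        (ENNReal.ofReal |ρ| * ∫⁻ α in Set.Ioc (0 : ℝ) (1 / |ρ|),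
          distFun (ballInt G R) α) ∂ν < ⊤)
    (φ : ℕ → Rd d → ℝ)
    (hφm : ∀ n, Measurable (φ n))
    (hφb : ∀ n, BddAbove (Set.range fun y => |φ n y|))
    (hφs : ∀ n, ∀ y : Rd d, r ≤ ‖y‖ → φ n y = 0)
    (hφ0 : Tendsto (fun n => ⨆ y, |φ n y|) atTop (𝓝 (0 : ℝ))) :
    Tendsto (fun n => ∫⁻ x, ∫⁻ ρ,
        ENNReal.ofReal (|ρ * conv (φ n) G x| *
          |(if |ρ * conv (φ n) G x| ≤ 1 then (1 : ℝ) else 0) -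
            (if |ρ| ≤ 1 then (1 : ℝ) else 0)|) ∂ν)
      atTop (𝓝 (0 : ℝ≥0∞)) :=
  statement2_general ν hνlevy G hG r R hrR hass2 φ hφb hφs hφ0
end
end

section
/- Let d ∈ ℕ, let ν be a Lévy measure on ℝ, let G ∈ L¹(ℝ^d), let 0 < r < R, and assume ∫_{|ρ|>1} |ρ| (∫_0^{1/|ρ|} d_{G_R}(α) λ¹(dα)) ν(dρ) < ∞, where G_R(x) := ∫_{B_R(x)} |G(y)| λ^d(dy). Let (φ_n) be a sequence of bounded measurable functions on ℝ^d with φ_n(y) = 0 for ‖y‖ ≥ r and ‖φ_n‖_∞ → 0 as n → ∞. Then ∫_{ℝ^d} ∫_ℝ min(1, (ρ·(φ_n*G)(x))²) ν(dρ) λ^d(dx) → 0 as n → ∞. -/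
open MeasureTheory ENNReal Filter Topology

noncomputable section

/-!
Put `g x = ∫_{B_R(x)} |G|`. Since `φ_n` vanishes outside `B_r(0)` and `r < R`,
`|(φ_n * G)(x)| ≤ ‖φ_n‖_∞ g(x)`, so by Tonelli the double integral is at most
`∫ H(‖φ_n‖_∞ |ρ|) ν(dρ)` with `H(s) = ∫ min(1, s² g²)`, a monotone function with
`H(s) ≤ s² ∫ g²`. Dominated convergence in `ρ` then finishes, the majorant being
`H(|ρ|)`: for `|ρ| ≤ 1` it is at most `ρ² ∫ g²`, finite because `g ≤ ‖G‖₁` and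
`∫ g = λ(B_R) ‖G‖₁`; for `|ρ| > 1`, `min(1, s²) ≤ min(1, s)` and the layer-cake formula
give `H(|ρ|) ≤ |ρ| ∫_0^{1/|ρ|} d_g(α) dα`, which is integrable by assumption.
Tonelli needs `ν` to be σ-finite, which follows from the Lévy condition and `ν{0} = 0`.
-/

theorem ENNReal.min_one_sq_le_min_one (s : ℝ≥0∞) : min 1 (s ^ 2) ≤ min 1 s := by
  rcases le_total s 1 with hs | hs
  · exact min_le_min le_rfl (pow_le_of_le_one zero_le hs two_ne_zero)
  · simp [hs]

section LevyMeasure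

variable {ν : Measure ℝ}

theorem measure_lt_abs_lt_top_of_lintegral_min_one_sq_lt_top
    (hν : ∫⁻ ρ, ENNReal.ofReal (min 1 (ρ ^ 2)) ∂ν < ⊤) {c : ℝ} (hc : 0 < c) :
    ν {ρ | c < |ρ|} < ∞ := by
  set m := ENNReal.ofReal (min 1 (c ^ 2))
  have hm : m ≠ 0 := (ENNReal.ofReal_pos.2 (lt_min one_pos (by positivity))).ne'
  have hsub : {ρ : ℝ | c < |ρ|} ⊆ {ρ | m ≤ ENNReal.ofReal (min 1 (ρ ^ 2))} :=
    fun ρ (hρ : c < |ρ|) => ENNReal.ofReal_le_ofReal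
      (min_le_min le_rfl (by simpa using pow_le_pow_left₀ hc.le hρ.le 2))
  refine ENNReal.lt_top_of_mul_ne_top_right (ne_top_of_le_ne_top hν.ne ?_) hm
  calc m * ν {ρ | c < |ρ|} ≤ m * ν {ρ | m ≤ ENNReal.ofReal (min 1 (ρ ^ 2))} := by
        gcongr
    _ ≤ _ := mul_meas_ge_le_lintegral₀ (by fun_prop) m

theorem sigmaFinite_of_lintegral_min_one_sq_lt_top (hν0 : ν {0} = 0)
    (hν : ∫⁻ ρ, ENNReal.ofReal (min 1 (ρ ^ 2)) ∂ν < ⊤) : SigmaFinite ν := by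
  refine Measure.sigmaFinite_of_countable
    (Set.countable_range fun n : ℕ => {ρ : ℝ | ((n : ℝ) + 1)⁻¹ < |ρ|} ∪ {0}) ?_ ?_
  · rintro _ ⟨n, rfl⟩
    refine (measure_union_le _ _).trans_lt ?_
    rw [hν0, add_zero]
    exact measure_lt_abs_lt_top_of_lintegral_min_one_sq_lt_top hν (by positivity)
  · refine Set.eq_univ_of_forall fun ρ => ?_
    rcases eq_or_ne ρ 0 with rfl | hρ
    · exact ⟨_, ⟨0, rfl⟩, Or.inr rfl⟩
    · obtain ⟨n, hn⟩ := exists_nat_one_div_lt (abs_pos.2 hρ)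
      exact ⟨_, ⟨n, rfl⟩, Or.inl (by simpa [one_div] using hn)⟩

end LevyMeasure

theorem min_ofReal_le_volume_inter_Ioc (b : ℝ) (t : ℝ≥0∞) :
    min (ENNReal.ofReal b) t ≤ volume ({α : ℝ | ENNReal.ofReal α < t} ∩ Set.Ioc 0 b) := by
  rcases eq_or_ne t ∞ with rfl | ht
  · simp
  · calc min (ENNReal.ofReal b) t = volume (Set.Ioo 0 (min b t.toReal)) := by
          rw [Real.volume_Ioo, sub_zero, ENNReal.ofReal_min, ENNReal.ofReal_toReal ht]
      _ ≤ _ := by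
          refine measure_mono fun α hα => ⟨?_, hα.1, (hα.2.trans_le (min_le_left _ _)).le⟩
          exact (ENNReal.ofReal_lt_iff_lt_toReal hα.1.le ht).2 (hα.2.trans_le (min_le_right _ _))

section MinOneSq

variable {X : Type*} [MeasurableSpace X] {μ : Measure X} {g : X → ℝ≥0∞}

theorem lintegral_min_one_mul_sq_le {s : ℝ≥0∞} (hs : s ≠ ∞) :
    ∫⁻ x, min 1 ((s * g x) ^ 2) ∂μ ≤ s ^ 2 * ∫⁻ x, g x ^ 2 ∂μ :=
  calc ∫⁻ x, min 1 ((s * g x) ^ 2) ∂μ ≤ ∫⁻ x, s ^ 2 * g x ^ 2 ∂μ :=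
        lintegral_mono fun _ => (min_le_right _ _).trans_eq (mul_pow _ _ _)
    _ = s ^ 2 * ∫⁻ x, g x ^ 2 ∂μ := lintegral_const_mul' _ _ (pow_ne_top hs)

theorem tendsto_lintegral_min_one_mul_sq_nhds_zero (hS : ∫⁻ x, g x ^ 2 ∂μ ≠ ∞) :
    Tendsto (fun s => ∫⁻ x, min 1 ((s * g x) ^ 2) ∂μ) (𝓝 0) (𝓝 0) := by
  have hlim : Tendsto (fun s : ℝ≥0∞ => s ^ 2 * ∫⁻ x, g x ^ 2 ∂μ) (𝓝 0) (𝓝 0) := by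
    simpa using ENNReal.Tendsto.mul_const ((ENNReal.continuous_pow 2).tendsto 0) (Or.inr hS)
  refine tendsto_of_tendsto_of_tendsto_of_le_of_le' tendsto_const_nhds hlim
    (Eventually.of_forall fun _ => zero_le) ?_
  filter_upwards [Iio_mem_nhds zero_lt_top] with s hs
  exact lintegral_min_one_mul_sq_le hs.ne

theorem lintegral_min_ofReal_le_lintegral_meas_lt [SFinite μ] (hg : Measurable g) (b : ℝ) :
    ∫⁻ x, min (ENNReal.ofReal b) (g x) ∂μ ≤
      ∫⁻ α in Set.Ioc 0 b, μ {x | ENNReal.ofReal α < g x} := by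
  set T := {p : X × ℝ | ENNReal.ofReal p.2 < g p.1}
  have hT : MeasurableSet T := measurableSet_lt (by fun_prop) (by fun_prop)
  calc ∫⁻ x, min (ENNReal.ofReal b) (g x) ∂μ
      ≤ ∫⁻ x, (∫⁻ α in Set.Ioc 0 b, T.indicator 1 (x, α)) ∂μ := by
        refine lintegral_mono fun x => (min_ofReal_le_volume_inter_Ioc b (g x)).trans_eq ?_
        rw [← Measure.restrict_apply (measurableSet_lt (by fun_prop) measurable_const),
          ← lintegral_indicator_one (measurableSet_lt (by fun_prop) measurable_const)]
        rfl
    _ = ∫⁻ α in Set.Ioc 0 b, ∫⁻ x, T.indicator 1 (x, α) ∂μ :=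
        lintegral_lintegral_swap (f := fun x α => T.indicator 1 (x, α))
          (measurable_one.indicator hT).aemeasurable
    _ = ∫⁻ α in Set.Ioc 0 b, μ {x | ENNReal.ofReal α < g x} := by
        congr with α
        rw [← lintegral_indicator_one (measurableSet_lt measurable_const hg)]
        rfl

theorem lintegral_min_one_ofReal_mul_sq_le [SFinite μ] (hg : Measurable g) {c : ℝ}
    (hc : 0 < c) :
    ∫⁻ x, min 1 ((ENNReal.ofReal c * g x) ^ 2) ∂μ ≤
      ENNReal.ofReal c * ∫⁻ α in Set.Ioc 0 (1 / c), μ {x | ENNReal.ofReal α < g x} := by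
  have hc1 : ENNReal.ofReal c * ENNReal.ofReal (1 / c) = 1 := by
    rw [← ENNReal.ofReal_mul hc.le, mul_one_div_cancel hc.ne', ENNReal.ofReal_one]
  calc ∫⁻ x, min 1 ((ENNReal.ofReal c * g x) ^ 2) ∂μ
      ≤ ∫⁻ x, min 1 (ENNReal.ofReal c * g x) ∂μ :=
        lintegral_mono fun _ => ENNReal.min_one_sq_le_min_one _
    _ = ∫⁻ x, ENNReal.ofReal c * min (ENNReal.ofReal (1 / c)) (g x) ∂μ := by
        simp_rw [mul_min, hc1]
    _ = ENNReal.ofReal c * ∫⁻ x, min (ENNReal.ofReal (1 / c)) (g x) ∂μ :=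
        lintegral_const_mul' _ _ ENNReal.ofReal_ne_top
    _ ≤ _ := by
        gcongr
        exact lintegral_min_ofReal_le_lintegral_meas_lt hg _

theorem lintegral_lintegral_min_one_sq_lt_top [SFinite μ] {ν : Measure ℝ}
    (hν : ∫⁻ ρ, ENNReal.ofReal (min 1 (ρ ^ 2)) ∂ν < ⊤) (hg : Measurable g)
    (hS : ∫⁻ x, g x ^ 2 ∂μ < ∞)
    (hlarge : ∫⁻ ρ in {ρ : ℝ | 1 < |ρ|}, (ENNReal.ofReal |ρ| *
      ∫⁻ α in Set.Ioc 0 (1 / |ρ|), μ {x | ENNReal.ofReal α < g x}) ∂ν < ⊤) :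
    ∫⁻ ρ, ∫⁻ x, min 1 ((ENNReal.ofReal |ρ| * g x) ^ 2) ∂μ ∂ν < ∞ := by
  have hs : MeasurableSet {ρ : ℝ | 1 < |ρ|} := measurableSet_lt measurable_const measurable_abs
  set S := ∫⁻ x, g x ^ 2 ∂μ
  have hsmall : ∀ ρ ∈ {ρ : ℝ | 1 < |ρ|}ᶜ, ∫⁻ x, min 1 ((ENNReal.ofReal |ρ| * g x) ^ 2) ∂μ
      ≤ ENNReal.ofReal (min 1 (ρ ^ 2)) * S := fun ρ hρ =>
    calc ∫⁻ x, min 1 ((ENNReal.ofReal |ρ| * g x) ^ 2) ∂μ ≤ ENNReal.ofReal |ρ| ^ 2 * S :=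
          lintegral_min_one_mul_sq_le ENNReal.ofReal_ne_top
      _ = ENNReal.ofReal (min 1 (ρ ^ 2)) * S := by
          have : ρ ^ 2 ≤ 1 := by simpa using (sq_le_one_iff_abs_le_one ρ).2 (not_lt.1 hρ)
          rw [← ENNReal.ofReal_pow (abs_nonneg ρ), sq_abs, min_eq_right this]
  rw [← lintegral_add_compl _ hs]
  refine ENNReal.add_lt_top.2 ⟨?_, ?_⟩
  · refine (setLIntegral_mono' hs fun ρ (hρ : 1 < |ρ|) => ?_).trans_lt hlarge
    exact lintegral_min_one_ofReal_mul_sq_le hg (one_pos.trans hρ)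
  · calc _ ≤ ∫⁻ ρ in {ρ : ℝ | 1 < |ρ|}ᶜ, ENNReal.ofReal (min 1 (ρ ^ 2)) * S ∂ν :=
          setLIntegral_mono' hs.compl hsmall
      _ ≤ (∫⁻ ρ, ENNReal.ofReal (min 1 (ρ ^ 2)) ∂ν) * S := by
          rw [lintegral_mul_const' _ _ hS.ne]
          exact mul_le_mul_left (setLIntegral_le_lintegral _ _) _
      _ < ∞ := ENNReal.mul_lt_top hν hS

end MinOneSq

theorem tendsto_lintegral_comp_mul_of_monotone {Ω : Type*} [MeasurableSpace Ω] {ν : Measure Ω}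
    {H : ℝ≥0∞ → ℝ≥0∞} (hH : Monotone H) (hH0 : Tendsto H (𝓝 0) (𝓝 0)) {a : Ω → ℝ≥0∞}
    (ha : Measurable a) (ha_top : ∀ ω, a ω ≠ ∞) (hint : ∫⁻ ω, H (a ω) ∂ν ≠ ∞)
    {e : ℕ → ℝ≥0∞} (he : Tendsto e atTop (𝓝 0)) :
    Tendsto (fun n => ∫⁻ ω, H (e n * a ω) ∂ν) atTop (𝓝 0) := by
  have hdom : ∀ᶠ n in atTop, ∀ᵐ ω ∂ν, H (e n * a ω) ≤ H (a ω) := by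
    filter_upwards [he.eventually_le_const zero_lt_one] with n hn
    exact ae_of_all _ fun ω => hH (mul_le_of_le_one_left zero_le hn)
  have hlim : ∀ ω, Tendsto (fun n => H (e n * a ω)) atTop (𝓝 0) := fun ω =>
    hH0.comp (by simpa using ENNReal.Tendsto.mul_const he (Or.inr (ha_top ω)))
  simpa using tendsto_lintegral_filter_of_dominated_convergence _
    (Eventually.of_forall fun n => hH.measurable.comp (measurable_const.mul ha)) hdom hint
    (ae_of_all _ hlim)

section BallLIntegral

variable {E : Type*} [PseudoMetricSpace E] [MeasurableSpace E] [OpensMeasurableSpace E]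
  {μ : Measure E} {f : E → ℝ≥0∞}

theorem measurable_indicator_ball_uncurry [SecondCountableTopology E] (hf : Measurable f)
    (R : ℝ) :
    Measurable fun p : E × E => (Metric.ball p.1 R).indicator f p.2 :=
  (hf.comp measurable_snd).indicator (measurableSet_lt (by fun_prop) measurable_const)

theorem setLIntegral_ball_mk (hf : AEMeasurable f μ) (x : E) (R : ℝ) :
    ∫⁻ y in Metric.ball x R, f y ∂μ = ∫⁻ y, (Metric.ball x R).indicator (hf.mk f) y ∂μ := by
  rw [lintegral_indicator measurableSet_ball]
  exact lintegral_congr_ae (ae_restrict_of_ae hf.ae_eq_mk)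

theorem measurable_setLIntegral_ball [SecondCountableTopology E] [SFinite μ]
    (hf : AEMeasurable f μ) (R : ℝ) :
    Measurable fun x => ∫⁻ y in Metric.ball x R, f y ∂μ := by
  simp_rw [setLIntegral_ball_mk hf]
  exact (measurable_indicator_ball_uncurry hf.measurable_mk R).lintegral_prod_right'

end BallLIntegral

section HaarBallLIntegral

variable {E : Type*} [NormedAddCommGroup E] [NormedSpace ℝ E] [FiniteDimensional ℝ E]
  [MeasurableSpace E] [BorelSpace E] {μ : Measure E} [μ.IsAddHaarMeasure] {f : E → ℝ≥0∞}

theorem lintegral_setLIntegral_ball (hf : AEMeasurable f μ) (R : ℝ) :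
    ∫⁻ x, ∫⁻ y in Metric.ball x R, f y ∂μ ∂μ = μ (Metric.ball 0 R) * ∫⁻ y, f y ∂μ := by
  have hswap : ∀ x y, (Metric.ball x R).indicator (hf.mk f) y
      = (Metric.ball y R).indicator (fun _ => hf.mk f y) x := fun x y => by
    simp only [Set.indicator, Metric.mem_ball, dist_comm y x]
  calc ∫⁻ x, ∫⁻ y in Metric.ball x R, f y ∂μ ∂μ
      = ∫⁻ y, ∫⁻ x, (Metric.ball x R).indicator (hf.mk f) y ∂μ ∂μ := by
        simp_rw [setLIntegral_ball_mk hf]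
        exact lintegral_lintegral_swap
          (measurable_indicator_ball_uncurry hf.measurable_mk R).aemeasurable
    _ = ∫⁻ y, μ (Metric.ball 0 R) * hf.mk f y ∂μ := by
        simp_rw [hswap, lintegral_indicator measurableSet_ball, setLIntegral_const,
          Measure.addHaar_ball_center, mul_comm]
    _ = μ (Metric.ball 0 R) * ∫⁻ y, f y ∂μ := by
        rw [lintegral_const_mul' _ _ measure_ball_lt_top.ne, lintegral_congr_ae hf.ae_eq_mk]

theorem lintegral_setLIntegral_ball_sq_lt_top (hf : AEMeasurable f μ)
    (hfi : ∫⁻ y, f y ∂μ < ∞) (R : ℝ) :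
    ∫⁻ x, (∫⁻ y in Metric.ball x R, f y ∂μ) ^ 2 ∂μ < ∞ :=
  calc ∫⁻ x, (∫⁻ y in Metric.ball x R, f y ∂μ) ^ 2 ∂μ
      ≤ ∫⁻ x, (∫⁻ y, f y ∂μ) * ∫⁻ y in Metric.ball x R, f y ∂μ ∂μ :=
        lintegral_mono fun x => by
          rw [sq]
          exact mul_le_mul_left (setLIntegral_le_lintegral _ _) _
    _ = (∫⁻ y, f y ∂μ) * (μ (Metric.ball 0 R) * ∫⁻ y, f y ∂μ) := by
        rw [lintegral_const_mul' _ _ hfi.ne, lintegral_setLIntegral_ball hf]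
    _ < ∞ := ENNReal.mul_lt_top hfi (ENNReal.mul_lt_top measure_ball_lt_top hfi)

end HaarBallLIntegral

section Convolution

variable {d : ℕ}

theorem enorm_conv_le {φ : Rd d → ℝ} {r M : ℝ} (hM : ∀ y, |φ y| ≤ M)
    (hφs : ∀ y : Rd d, r ≤ ‖y‖ → φ y = 0) (G : Rd d → ℝ) (x : Rd d) :
    ‖conv φ G x‖ₑ ≤ ENNReal.ofReal M * ∫⁻ y in Metric.ball x r, ‖G y‖ₑ := by
  have hpt : ∀ y, ‖G y * φ (x - y)‖ₑ ≤
      (Metric.ball x r).indicator (fun y => ENNReal.ofReal M * ‖G y‖ₑ) y := by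
    intro y
    by_cases hy : y ∈ Metric.ball x r
    · rw [Set.indicator_of_mem hy, enorm_mul, mul_comm, Real.enorm_eq_ofReal_abs (φ _)]
      gcongr
      exact hM _
    · rw [hφs _ (by simpa [dist_eq_norm, norm_sub_rev] using hy)]
      simp
  calc ‖conv φ G x‖ₑ ≤ ∫⁻ y, ‖G y * φ (x - y)‖ₑ := enorm_integral_le_lintegral_enorm _
    _ ≤ ∫⁻ y, (Metric.ball x r).indicator (fun y => ENNReal.ofReal M * ‖G y‖ₑ) y :=
        lintegral_mono hpt
    _ = ENNReal.ofReal M * ∫⁻ y in Metric.ball x r, ‖G y‖ₑ := by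
        rw [lintegral_indicator measurableSet_ball, lintegral_const_mul' _ _ ENNReal.ofReal_ne_top]

theorem ofReal_ballInt {G : Rd d → ℝ} (hG : LocallyIntegrable G) (R : ℝ) (x : Rd d) :
    ENNReal.ofReal (ballInt G R x) = ∫⁻ y in Metric.ball x R, ‖G y‖ₑ :=
  ofReal_integral_norm_eq_lintegral_enorm
    ((hG.integrableOn_isCompact (isCompact_closedBall x R)).mono_set Metric.ball_subset_closedBall)

theorem distFun_ballInt {G : Rd d → ℝ} (hG : LocallyIntegrable G) (R : ℝ) {α : ℝ} (hα : 0 ≤ α) :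
    distFun (ballInt G R) α = volume {x | ENNReal.ofReal α < ∫⁻ y in Metric.ball x R, ‖G y‖ₑ} := by
  refine congrArg volume (Set.ext fun x => ?_)
  have hnonneg : 0 ≤ ballInt G R x := integral_nonneg fun _ => abs_nonneg _
  simp only [Set.mem_ofPred_eq, abs_of_nonneg hnonneg, ← ofReal_ballInt hG,
    ENNReal.ofReal_lt_ofReal_iff_of_nonneg hα]

theorem lintegral_lintegral_min_one_conv_le {ν : Measure ℝ} [SFinite ν] {φ G : Rd d → ℝ}
    (hG : AEStronglyMeasurable G) {r R M : ℝ} (hM : ∀ y, |φ y| ≤ M)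
    (hφs : ∀ y : Rd d, r ≤ ‖y‖ → φ y = 0) (hrR : r ≤ R) :
    ∫⁻ x, ∫⁻ ρ, min 1 (ENNReal.ofReal ((ρ * conv φ G x) ^ 2)) ∂ν ≤
      ∫⁻ ρ, (∫⁻ x, min 1 ((ENNReal.ofReal M * ENNReal.ofReal |ρ| *
        ∫⁻ y in Metric.ball x R, ‖G y‖ₑ) ^ 2)) ∂ν := by
  set g : Rd d → ℝ≥0∞ := fun x => ∫⁻ y in Metric.ball x R, ‖G y‖ₑ
  have hg : Measurable g := measurable_setLIntegral_ball hG.enorm R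
  have hpt : ∀ x ρ, ENNReal.ofReal ((ρ * conv φ G x) ^ 2) ≤
      (ENNReal.ofReal M * ENNReal.ofReal |ρ| * g x) ^ 2 := fun x ρ =>
    calc ENNReal.ofReal ((ρ * conv φ G x) ^ 2) = (ENNReal.ofReal |ρ| * ‖conv φ G x‖ₑ) ^ 2 := by
          rw [← sq_abs, ENNReal.ofReal_pow (abs_nonneg _), ← Real.enorm_eq_ofReal_abs,
            enorm_mul, Real.enorm_eq_ofReal_abs]
      _ ≤ (ENNReal.ofReal |ρ| * (ENNReal.ofReal M * g x)) ^ 2 := by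
          gcongr
          exact (enorm_conv_le hM hφs G x).trans
            (by gcongr; exact lintegral_mono_set (Metric.ball_subset_ball hrR))
      _ = (ENNReal.ofReal M * ENNReal.ofReal |ρ| * g x) ^ 2 := by ring
  calc ∫⁻ x, ∫⁻ ρ, min 1 (ENNReal.ofReal ((ρ * conv φ G x) ^ 2)) ∂ν
      ≤ ∫⁻ x, ∫⁻ ρ, min 1 ((ENNReal.ofReal M * ENNReal.ofReal |ρ| * g x) ^ 2) ∂ν :=
        lintegral_mono fun x => lintegral_mono fun ρ => min_le_min le_rfl (hpt x ρ)
    _ = _ := lintegral_lintegral_swap (by fun_prop)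

end Convolution

theorem statement3_general {d : ℕ} (ν : Measure ℝ)
    (hν0 : ν {0} = 0)
    (hνlevy : ∫⁻ ρ, ENNReal.ofReal (min 1 (ρ ^ 2)) ∂ν < ⊤)
    (G : Rd d → ℝ) (hG : MeasureTheory.Integrable G volume)
    (r R : ℝ) (hrR : r < R)
    (hass2 : ∫⁻ ρ in {ρ : ℝ | 1 < |ρ|},
        (ENNReal.ofReal |ρ| * ∫⁻ α in Set.Ioc (0 : ℝ) (1 / |ρ|),
          distFun (ballInt G R) α) ∂ν < ⊤)
    (φ : ℕ → Rd d → ℝ)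
    (hφb : ∀ n, BddAbove (Set.range fun y => |φ n y|))
    (hφs : ∀ n, ∀ y : Rd d, r ≤ ‖y‖ → φ n y = 0)
    (hφ0 : Tendsto (fun n => ⨆ y, |φ n y|) atTop (𝓝 (0 : ℝ))) :
    Tendsto (fun n => ∫⁻ x, ∫⁻ ρ,
        min 1 (ENNReal.ofReal ((ρ * conv (φ n) G x) ^ 2)) ∂ν)
      atTop (𝓝 (0 : ℝ≥0∞)) := by
  have := sigmaFinite_of_lintegral_min_one_sq_lt_top hν0 hνlevy
  set g : Rd d → ℝ≥0∞ := fun x => ∫⁻ y in Metric.ball x R, ‖G y‖ₑ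
  have hg : Measurable g := measurable_setLIntegral_ball hG.aestronglyMeasurable.enorm R
  have hS : ∫⁻ x, g x ^ 2 < ∞ :=
    lintegral_setLIntegral_ball_sq_lt_top hG.aestronglyMeasurable.enorm hG.2 R
  have hlarge : ∫⁻ ρ in {ρ : ℝ | 1 < |ρ|}, (ENNReal.ofReal |ρ| *
      ∫⁻ α in Set.Ioc 0 (1 / |ρ|), volume {x | ENNReal.ofReal α < g x}) ∂ν < ⊤ := by
    convert hass2 using 4 with ρ
    exact setLIntegral_congr_fun measurableSet_Ioc fun α hα =>
      (distFun_ballInt hG.locallyIntegrable R hα.1.le).symm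
  have hlim := tendsto_lintegral_comp_mul_of_monotone
    (H := fun s => ∫⁻ x, min 1 ((s * g x) ^ 2)) (fun s t hst => lintegral_mono fun x => by gcongr)
    (tendsto_lintegral_min_one_mul_sq_nhds_zero hS.ne) measurable_abs.ennreal_ofReal
    (fun _ => ENNReal.ofReal_ne_top) (lintegral_lintegral_min_one_sq_lt_top hνlevy hg hS hlarge).ne
    (by simpa using ENNReal.tendsto_ofReal hφ0)
  refine tendsto_of_tendsto_of_tendsto_of_le_of_le tendsto_const_nhds hlim (fun _ => zero_le)
    fun n => ?_
  exact lintegral_lintegral_min_one_conv_le hG.aestronglyMeasurable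
    (fun y => le_ciSup (hφb n) y) (hφs n) hrR.le

/-- under the integrability condition (ass2) on the Lévy measure `ν`,
`∫∫ min(1, (ρ·(φ_n*G)(x))²) ν(dρ) dx → 0` when `‖φ_n‖_∞ → 0`. -/
theorem statement3 {d : ℕ} (hd : 0 < d) (ν : Measure ℝ)
    (hν0 : ν {0} = 0)
    (hνlevy : ∫⁻ ρ, ENNReal.ofReal (min 1 (ρ ^ 2)) ∂ν < ⊤)
    (G : Rd d → ℝ) (hG : MeasureTheory.Integrable G volume)
    (r R : ℝ) (hr : 0 < r) (hrR : r < R)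
    (hass2 : ∫⁻ ρ in {ρ : ℝ | 1 < |ρ|},
        (ENNReal.ofReal |ρ| * ∫⁻ α in Set.Ioc (0 : ℝ) (1 / |ρ|),
          distFun (ballInt G R) α) ∂ν < ⊤)
    (φ : ℕ → Rd d → ℝ)
    (hφm : ∀ n, Measurable (φ n))
    (hφb : ∀ n, BddAbove (Set.range fun y => |φ n y|))
    (hφs : ∀ n, ∀ y : Rd d, r ≤ ‖y‖ → φ n y = 0)
    (hφ0 : Tendsto (fun n => ⨆ y, |φ n y|) atTop (𝓝 (0 : ℝ))) :
    Tendsto (fun n => ∫⁻ x, ∫⁻ ρ,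
        min 1 (ENNReal.ofReal ((ρ * conv (φ n) G x) ^ 2)) ∂ν)
      atTop (𝓝 (0 : ℝ≥0∞)) :=
  statement3_general ν hν0 hνlevy G hG r R hrR hass2 φ hφb hφs hφ0
end
end

section
/- Let d ∈ ℕ, 0 < β ≤ 2, let ν be a measure on ℝ with ∫_{|ρ| ≤ 1} ρ² ν(dρ) < ∞ and ∫_{|ρ| > 1} |ρ|^β ν(dρ) < ∞, and let G : ℝ^d → ℝ be measurable with G ∈ L²(ℝ^d) ∩ L^β(ℝ^d). Then ∫_ℝ |ρ|^β (∫_{{x : |G(x)| > 1/|ρ|}} |G(x)|^β λ^d(dx)) ν(dρ) < ∞. -/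
open MeasureTheory ENNReal Filter Topology

noncomputable section

/-- if `∫_{|ρ|≤1} ρ² ν(dρ) < ∞`, `∫_{|ρ|>1} |ρ|^β ν(dρ) < ∞` and
`G ∈ L² ∩ L^β`, then `∫ |ρ|^β (∫_{|G|>1/|ρ|} |G|^β) ν(dρ) < ∞`. -/
theorem statement17 {d : ℕ} (hd : 0 < d) (β : ℝ) (hβ0 : 0 < β) (hβ2 : β ≤ 2)
    (ν : Measure ℝ)
    (hν1 : ∫⁻ ρ in {ρ : ℝ | |ρ| ≤ 1}, ENNReal.ofReal (ρ ^ 2) ∂ν < ⊤)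
    (hν2 : ∫⁻ ρ in {ρ : ℝ | 1 < |ρ|}, ENNReal.ofReal (|ρ| ^ β) ∂ν < ⊤)
    (G : Rd d → ℝ) (hGm : Measurable G)
    (hG2 : ∫⁻ x, ENNReal.ofReal (|G x| ^ (2 : ℕ)) < ⊤)
    (hGβ : ∫⁻ x, ENNReal.ofReal (|G x| ^ β) < ⊤) :
    ∫⁻ ρ, (ENNReal.ofReal (|ρ| ^ β) *
        ∫⁻ x in {x : Rd d | 1 / |ρ| < |G x|}, ENNReal.ofReal (|G x| ^ β)) ∂ν < ⊤ := by
  set A := ∫⁻ x, ENNReal.ofReal (|G x| ^ (2 : ℕ)) with hA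
  set B := ∫⁻ x, ENNReal.ofReal (|G x| ^ β) with hB
  set f : ℝ → ℝ≥0∞ := fun ρ => ENNReal.ofReal (|ρ| ^ β) *
      ∫⁻ x in {x : Rd d | 1 / |ρ| < |G x|}, ENNReal.ofReal (|G x| ^ β) with hf
  have hsm : MeasurableSet {ρ : ℝ | |ρ| ≤ 1} :=
    (isClosed_le continuous_abs continuous_const).measurableSet
  have hcompl : {ρ : ℝ | |ρ| ≤ 1}ᶜ = {ρ : ℝ | 1 < |ρ|} := by
    ext ρ; simp [not_le]
  -- pointwise bound on |ρ| ≤ 1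
  have key1 : ∀ ρ : ℝ, |ρ| ≤ 1 → f ρ ≤ ENNReal.ofReal (ρ ^ 2) * A := by
    intro ρ hρ1
    rcases eq_or_ne ρ 0 with rfl | hρ0
    · simp [hf, Real.zero_rpow hβ0.ne']
    · have hρ : 0 < |ρ| := abs_pos.mpr hρ0
      have hinv : (1 : ℝ) ≤ 1 / |ρ| := one_le_one_div hρ hρ1
      have step : ∀ x : Rd d, 1 / |ρ| < |G x| →
          ENNReal.ofReal (|G x| ^ β) ≤
            ENNReal.ofReal (|ρ| ^ (2 - β)) * ENNReal.ofReal (|G x| ^ (2 : ℕ)) := by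
        intro x hx
        have hGx : (0 : ℝ) < |G x| := lt_of_lt_of_le (by linarith) hx.le
        have h1 : |G x| ^ β = |G x| ^ ((2 : ℝ) + (β - 2)) := by ring_nf
        have h2 : |G x| ^ ((2 : ℝ) + (β - 2)) = |G x| ^ (2 : ℝ) * |G x| ^ (β - 2) :=
          Real.rpow_add hGx _ _
        have h3 : |G x| ^ (β - 2) ≤ (1 / |ρ|) ^ (β - 2) :=
          Real.rpow_le_rpow_of_nonpos (by linarith) hx.le (by linarith)
        have h4 : (1 / |ρ|) ^ (β - 2) = |ρ| ^ (2 - β) := by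
          rw [one_div, ← Real.rpow_neg_one, ← Real.rpow_mul (abs_nonneg ρ)]
          ring_nf
        have h5 : |G x| ^ β ≤ |ρ| ^ (2 - β) * |G x| ^ (2 : ℕ) := by
          rw [h1, h2]
          calc |G x| ^ (2:ℝ) * |G x| ^ (β - 2)
              ≤ |G x| ^ (2:ℝ) * ((1 / |ρ|) ^ (β - 2)) := by
                apply mul_le_mul_of_nonneg_left h3 (Real.rpow_nonneg (abs_nonneg _) _)
            _ = |ρ| ^ (2 - β) * |G x| ^ (2 : ℕ) := by
                rw [h4, mul_comm]
                congr 1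
                rw [← Real.rpow_natCast |G x| 2]; norm_num
        calc ENNReal.ofReal (|G x| ^ β) ≤ ENNReal.ofReal (|ρ| ^ (2 - β) * |G x| ^ (2 : ℕ)) :=
              ENNReal.ofReal_le_ofReal h5
          _ = ENNReal.ofReal (|ρ| ^ (2 - β)) * ENNReal.ofReal (|G x| ^ (2 : ℕ)) :=
              ENNReal.ofReal_mul (Real.rpow_nonneg (abs_nonneg _) _)
      have hset : MeasurableSet {x : Rd d | 1 / |ρ| < |G x|} :=
        measurableSet_lt measurable_const hGm.abs
      have hbound : (∫⁻ x in {x : Rd d | 1 / |ρ| < |G x|}, ENNReal.ofReal (|G x| ^ β)) ≤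
          ENNReal.ofReal (|ρ| ^ (2 - β)) * A := by
        calc (∫⁻ x in {x : Rd d | 1 / |ρ| < |G x|}, ENNReal.ofReal (|G x| ^ β))
            ≤ ∫⁻ x in {x : Rd d | 1 / |ρ| < |G x|},
                ENNReal.ofReal (|ρ| ^ (2 - β)) * ENNReal.ofReal (|G x| ^ (2 : ℕ)) := by
              apply setLIntegral_mono' hset
              intro x hx; exact step x hx
          _ = ENNReal.ofReal (|ρ| ^ (2 - β)) *
                ∫⁻ x in {x : Rd d | 1 / |ρ| < |G x|}, ENNReal.ofReal (|G x| ^ (2 : ℕ)) :=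
              lintegral_const_mul _ ((hGm.abs.pow_const 2).ennreal_ofReal)
          _ ≤ ENNReal.ofReal (|ρ| ^ (2 - β)) * A := by
              gcongr
              exact setLIntegral_le_lintegral _ _
      calc f ρ ≤ ENNReal.ofReal (|ρ| ^ β) * (ENNReal.ofReal (|ρ| ^ (2 - β)) * A) := by
            rw [hf]; dsimp only; gcongr
        _ = ENNReal.ofReal (|ρ| ^ β * |ρ| ^ (2 - β)) * A := by
            rw [ENNReal.ofReal_mul (Real.rpow_nonneg (abs_nonneg _) _), mul_assoc]
        _ = ENNReal.ofReal (ρ ^ 2) * A := by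
            congr 2
            rw [← Real.rpow_add hρ]
            have : β + (2 - β) = (2:ℕ) := by push_cast; ring
            rw [this, Real.rpow_natCast, sq_abs]
  have key2 : ∀ ρ : ℝ, f ρ ≤ ENNReal.ofReal (|ρ| ^ β) * B := by
    intro ρ
    rw [hf]; dsimp only
    gcongr
    exact setLIntegral_le_lintegral _ _
  have hsplit := lintegral_add_compl f hsm (μ := ν)
  rw [← hsplit]
  apply ENNReal.add_lt_top.mpr
  constructor
  · calc ∫⁻ ρ in {ρ : ℝ | |ρ| ≤ 1}, f ρ ∂ν
        ≤ ∫⁻ ρ in {ρ : ℝ | |ρ| ≤ 1}, ENNReal.ofReal (ρ ^ 2) * A ∂ν :=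
          setLIntegral_mono' hsm key1
      _ = (∫⁻ ρ in {ρ : ℝ | |ρ| ≤ 1}, ENNReal.ofReal (ρ ^ 2) ∂ν) * A :=
          lintegral_mul_const _ ((measurable_id.pow_const 2).ennreal_ofReal)
      _ < ⊤ := ENNReal.mul_lt_top hν1 hG2
  · rw [hcompl]
    calc ∫⁻ ρ in {ρ : ℝ | 1 < |ρ|}, f ρ ∂ν
        ≤ ∫⁻ ρ in {ρ : ℝ | 1 < |ρ|}, ENNReal.ofReal (|ρ| ^ β) * B ∂ν :=
          setLIntegral_mono' (measurableSet_lt measurable_const measurable_abs)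
            (fun ρ _ => key2 ρ)
      _ = (∫⁻ ρ in {ρ : ℝ | 1 < |ρ|}, ENNReal.ofReal (|ρ| ^ β) ∂ν) * B :=
          lintegral_mul_const _ ((measurable_abs.pow_const β).ennreal_ofReal)
      _ < ⊤ := ENNReal.mul_lt_top hν2 hGβ
end
end

section
/- Let d ∈ ℕ with d ≥ 5, let G : ℝ^d → ℝ be given by G(x) = ‖x‖^{2−d}, let ν be a measure on ℝ, and let φ : ℝ^d → ℝ be a smooth compactly supported function with φ ≥ 0 and φ(y) ≥ 1 for all y ∈ B_1(0). If ∫_ℝ ∫_{ℝ^d} min(1, (ρ·(G*φ)(x))²) λ^d(dx) ν(dρ) < ∞, then ∫_{|ρ| > 1} |ρ|^{d/(d−2)} ν(dρ) < ∞. -/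
/-!
Since `φ ≥ 1` on the unit ball, `(G * φ)(x) ≥ ∫_{B_1(x)} G ≥ |B_1| (‖x‖ + 1)^{2-d}`. Hence for
`|ρ| ≥ 1` the product `|ρ| (G * φ)(x)` stays above a fixed constant on the ball of radius
`|ρ|^{1/(d-2)}`, so the inner integral is at least a constant times the volume
`|B_1| |ρ|^{d/(d-2)}` of that ball; integrating in `ρ` gives the moment bound.
-/

open MeasureTheory ENNReal Filter Topology

noncomputable section

open Metric Set

lemma locallyIntegrable_norm_rpow_neg {E : Type*} [NormedAddCommGroup E] [NormedSpace ℝ E]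
    [FiniteDimensional ℝ E] [MeasurableSpace E] [BorelSpace E] (μ : Measure E)
    [μ.IsAddHaarMeasure] {α : ℝ} (hα : α < Module.finrank ℝ E) :
    LocallyIntegrable (fun x : E => ‖x‖ ^ (-α)) μ := by
  obtain hE | hE := Nat.eq_zero_or_pos (Module.finrank ℝ E)
  · have : Subsingleton E := Module.finrank_zero_iff.mp hE
    simpa only [Subsingleton.elim _ (0 : E)] using locallyIntegrable_const (‖(0 : E)‖ ^ (-α))
  exact locallyIntegrable_of_norm_le_rpow hE hα (C := 1)
    (ae_of_all _ fun x => by rw [one_mul, Real.norm_of_nonneg (Real.rpow_nonneg (norm_nonneg x) _)])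
    (measurable_norm.pow_const _).aestronglyMeasurable

lemma setLIntegral_lt_top_of_const_mul_le {X : Type*} [MeasurableSpace X] {μ : Measure X}
    {s : Set X} {f F : X → ℝ≥0∞} {c : ℝ≥0∞} (hc0 : c ≠ 0) (hctop : c ≠ ⊤) (hs : MeasurableSet s)
    (hf : ∀ x ∈ s, c * f x ≤ F x) (hF : ∫⁻ x, F x ∂μ < ⊤) : ∫⁻ x in s, f x ∂μ < ⊤ :=
  calc ∫⁻ x in s, f x ∂μ
      ≤ ∫⁻ x in s, c⁻¹ * F x ∂μ := setLIntegral_mono' hs fun x hx => by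
        rw [← ENNReal.div_eq_inv_mul, ENNReal.le_div_iff_mul_le (.inl hc0) (.inl hctop), mul_comm]
        exact hf x hx
    _ ≤ ∫⁻ x, c⁻¹ * F x ∂μ := setLIntegral_le_lintegral _ _
    _ = c⁻¹ * ∫⁻ x, F x ∂μ := lintegral_const_mul' _ _ (ENNReal.inv_ne_top.mpr hc0)
    _ < ⊤ := ENNReal.mul_lt_top (ENNReal.inv_lt_top.mpr (pos_iff_ne_zero.mpr hc0)) hF

section RieszKernel

variable {d : ℕ}

lemma ballInt_le_conv {φ G : Rd d → ℝ} (hG : ∀ y, 0 ≤ G y) (hφ0 : ∀ y, 0 ≤ φ y)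
    (hφ1 : ∀ y ∈ ball (0 : Rd d) 1, 1 ≤ φ y) {x : Rd d}
    (hint : Integrable (fun y => G y * φ (x - y))) : ballInt G 1 x ≤ conv φ G x := by
  rw [ballInt, ← integral_indicator measurableSet_ball]
  refine integral_mono_of_nonneg (ae_of_all _ fun y => indicator_nonneg (fun y _ => abs_nonneg _) y)
    hint (ae_of_all _ fun y => ?_)
  by_cases hy : y ∈ ball x 1
  · rw [indicator_of_mem hy, abs_of_nonneg (hG y)]
    refine le_mul_of_one_le_right (hG y) (hφ1 _ ?_)
    rwa [mem_ball_zero_iff, ← dist_eq_norm, dist_comm]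
  · rw [indicator_of_notMem hy]
    exact mul_nonneg (hG y) (hφ0 _)

variable {α : ℝ}

lemma measureReal_ball_mul_le_ballInt_norm_rpow_neg (hα0 : 0 ≤ α) (hαd : α < d)
    (x : Rd d) :
    volume.real (ball (0 : Rd d) 1) * (‖x‖ + 1) ^ (-α) ≤ ballInt (fun y => ‖y‖ ^ (-α)) 1 x := by
  have : Nonempty (Fin d) := ⟨⟨0, Nat.cast_pos.mp (hα0.trans_lt hαd)⟩⟩
  have hint : IntegrableOn (fun y : Rd d => ‖y‖ ^ (-α)) (ball x 1) :=
    ((locallyIntegrable_norm_rpow_neg volume (by simpa using hαd)).integrableOn_isCompact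
      (isCompact_closedBall x 1)).mono_set ball_subset_closedBall
  simp only [ballInt, abs_of_nonneg (Real.rpow_nonneg (norm_nonneg _) _)]
  calc volume.real (ball (0 : Rd d) 1) * (‖x‖ + 1) ^ (-α)
      = ∫ _ in ball x 1, (‖x‖ + 1) ^ (-α) := by
        rw [setIntegral_const, Measure.addHaar_real_ball_center volume x, smul_eq_mul]
    _ ≤ ∫ y in ball x 1, ‖y‖ ^ (-α) := by
        refine setIntegral_mono_on_ae (integrableOn_const measure_ball_lt_top.ne) hint
          measurableSet_ball ?_
        filter_upwards [Measure.ae_ne volume 0] with y hy0 hy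
        refine Real.rpow_le_rpow_of_nonpos (norm_pos_iff.mpr hy0) ?_ (neg_nonpos.mpr hα0)
        have := norm_le_norm_add_norm_sub' y x
        rw [mem_ball, dist_eq_norm] at hy
        linarith

lemma measureReal_ball_mul_le_conv_norm_rpow_neg (hα0 : 0 ≤ α) (hαd : α < d)
    {φ : Rd d → ℝ} (hφc : HasCompactSupport φ) (hφ : Continuous φ) (hφ0 : ∀ y, 0 ≤ φ y)
    (hφ1 : ∀ y ∈ ball (0 : Rd d) 1, 1 ≤ φ y) (x : Rd d) :
    volume.real (ball (0 : Rd d) 1) * (‖x‖ + 1) ^ (-α) ≤ conv φ (fun y => ‖y‖ ^ (-α)) x := by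
  have hint := hφc.convolutionExists_right (ContinuousLinearMap.mul ℝ ℝ)
    (locallyIntegrable_norm_rpow_neg volume (by simpa using hαd)) hφ x
  simp only [ConvolutionExistsAt, ContinuousLinearMap.mul_apply'] at hint
  exact (measureReal_ball_mul_le_ballInt_norm_rpow_neg hα0 hαd x).trans
    (ballInt_le_conv (fun _ => Real.rpow_nonneg (norm_nonneg _) _) hφ0 hφ1 hint)

lemma measureReal_ball_mul_le_abs_mul_conv_norm_rpow_neg (hα0 : 0 < α) (hαd : α < d)
    {φ : Rd d → ℝ} (hφc : HasCompactSupport φ) (hφ : Continuous φ)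
    (hφ0 : ∀ y, 0 ≤ φ y) (hφ1 : ∀ y ∈ ball (0 : Rd d) 1, 1 ≤ φ y) {ρ : ℝ} (hρ : 1 ≤ |ρ|)
    {x : Rd d} (hx : ‖x‖ ≤ |ρ| ^ α⁻¹) :
    volume.real (ball (0 : Rd d) 1) * 2 ^ (-α) ≤ |ρ| * conv φ (fun y => ‖y‖ ^ (-α)) x := by
  set r := |ρ| ^ α⁻¹
  have hr : 1 ≤ r := Real.one_le_rpow hρ (inv_nonneg.mpr hα0.le)
  have hρ0 : 0 < |ρ| := one_pos.trans_le hρ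
  have hrα : r ^ (-α) = |ρ|⁻¹ := by
    rw [← Real.rpow_mul hρ0.le, inv_mul_eq_div, neg_div, div_self hα0.ne', Real.rpow_neg_one]
  have hx1 : (2 * r) ^ (-α) ≤ (‖x‖ + 1) ^ (-α) :=
    Real.rpow_le_rpow_of_nonpos (by positivity) (by linarith) (neg_nonpos.mpr hα0.le)
  calc volume.real (ball (0 : Rd d) 1) * 2 ^ (-α)
      = |ρ| * (volume.real (ball (0 : Rd d) 1) * (2 * r) ^ (-α)) := by
        rw [Real.mul_rpow zero_le_two (by positivity), hrα]
        field_simp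
    _ ≤ |ρ| * conv φ (fun y => ‖y‖ ^ (-α)) x := by
        gcongr
        exact (mul_le_mul_of_nonneg_left hx1 measureReal_nonneg).trans
          (measureReal_ball_mul_le_conv_norm_rpow_neg hα0.le hαd hφc hφ hφ0 hφ1 x)

lemma exists_mul_rpow_le_lintegral_min_one_sq_conv (hα0 : 0 < α) (hαd : α < d)
    {φ : Rd d → ℝ} (hφc : HasCompactSupport φ) (hφ : Continuous φ) (hφ0 : ∀ y, 0 ≤ φ y)
    (hφ1 : ∀ y ∈ ball (0 : Rd d) 1, 1 ≤ φ y) :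
    ∃ c : ℝ≥0∞, c ≠ 0 ∧ c ≠ ⊤ ∧ ∀ ρ : ℝ, 1 ≤ |ρ| → c * ENNReal.ofReal (|ρ| ^ ((d : ℝ) / α)) ≤
      ∫⁻ x, min 1 (ENNReal.ofReal ((ρ * conv φ (fun y => ‖y‖ ^ (-α)) x) ^ 2)) := by
  set κ := volume.real (ball (0 : Rd d) 1) * 2 ^ (-α)
  have hκ : 0 < κ := mul_pos (ENNReal.toReal_pos (measure_ball_pos _ _ one_pos).ne'
    measure_ball_lt_top.ne) (by positivity)
  refine ⟨min 1 (ENNReal.ofReal (κ ^ 2)) * volume (ball (0 : Rd d) 1), ?_, ?_, fun ρ hρ => ?_⟩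
  · exact mul_ne_zero (lt_min one_pos (ENNReal.ofReal_pos.mpr (by positivity))).ne'
      (measure_ball_pos _ _ one_pos).ne'
  · exact mul_ne_top (min_le_left _ _ |>.trans_lt one_lt_top).ne measure_ball_lt_top.ne
  set r := |ρ| ^ α⁻¹
  have hr : 0 ≤ r := by positivity
  have hvol : volume (closedBall (0 : Rd d) r) =
      ENNReal.ofReal (|ρ| ^ ((d : ℝ) / α)) * volume (ball (0 : Rd d) 1) := by
    rw [Measure.addHaar_closedBall _ _ hr, finrank_euclideanSpace_fin, ← Real.rpow_natCast,
      ← Real.rpow_mul (abs_nonneg ρ), inv_mul_eq_div]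
  calc min 1 (ENNReal.ofReal (κ ^ 2)) * volume (ball (0 : Rd d) 1) *
        ENNReal.ofReal (|ρ| ^ ((d : ℝ) / α))
      = ∫⁻ _ in closedBall (0 : Rd d) r, min 1 (ENNReal.ofReal (κ ^ 2)) := by
        rw [setLIntegral_const, hvol]; ring
    _ ≤ ∫⁻ x in closedBall (0 : Rd d) r,
          min 1 (ENNReal.ofReal ((ρ * conv φ (fun y => ‖y‖ ^ (-α)) x) ^ 2)) := by
        refine setLIntegral_mono' measurableSet_closedBall fun x hx => ?_
        have := measureReal_ball_mul_le_abs_mul_conv_norm_rpow_neg hα0 hαd hφc hφ hφ0 hφ1 hρ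
          (mem_closedBall_zero_iff.mp hx)
        refine min_le_min le_rfl (ENNReal.ofReal_le_ofReal ?_)
        exact (pow_le_pow_left₀ hκ.le this 2).trans_eq (by rw [mul_pow, sq_abs, mul_pow])
    _ ≤ _ := setLIntegral_le_lintegral _ _

end RieszKernel

/-- necessity of the moment condition for `G(x) = ‖x‖^{2-d}`, `d ≥ 5`:
if `∫∫ min(1, (ρ·(G*φ)(x))²) dx ν(dρ) < ∞` for a smooth compactly supported `φ ≥ 0`
with `φ ≥ 1` on `B_1(0)`, then `∫_{|ρ|>1} |ρ|^{d/(d-2)} ν(dρ) < ∞`. -/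
theorem statement19 {d : ℕ} (hd : 5 ≤ d) (ν : Measure ℝ)
    (φ : Rd d → ℝ) (hφsm : ContDiff ℝ (⊤ : ℕ∞) φ) (hφc : HasCompactSupport φ)
    (hφ0 : ∀ y, 0 ≤ φ y) (hφ1 : ∀ y ∈ Metric.ball (0 : Rd d) 1, 1 ≤ φ y)
    (h : ∫⁻ ρ, (∫⁻ x, min 1 (ENNReal.ofReal
        ((ρ * conv φ (fun y : Rd d => ‖y‖ ^ ((2 : ℝ) - d)) x) ^ 2))) ∂ν < ⊤) :
    ∫⁻ ρ in {ρ : ℝ | 1 < |ρ|},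
        ENNReal.ofReal (|ρ| ^ ((d : ℝ) / ((d : ℝ) - 2))) ∂ν < ⊤ := by
  have hd5 : (5 : ℝ) ≤ d := by exact_mod_cast hd
  rw [← neg_sub] at h
  obtain ⟨c, hc0, hctop, hc⟩ := exists_mul_rpow_le_lintegral_min_one_sq_conv
    (by linarith : (0 : ℝ) < d - 2) (by linarith) hφc hφsm.continuous hφ0 hφ1
  exact setLIntegral_lt_top_of_const_mul_le hc0 hctop
    (isOpen_lt continuous_const continuous_abs).measurableSet (fun ρ hρ => hc ρ hρ.le) h
end
end
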